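/- Let G be a graph and let M be a lift of the cycle matroid M(G). Then G is a framework for M, and moreover for every pair of vertex-disjoint cycles C1, C2 of G, the set E(C1) ∪ E(C2) is dependent in M. -/

import Mathlib

open Set Matroid
open scoped Classical

namespace QuasiGraphicPaper

universe u v

/-- A finite multigraph: a set `V` of vertices (in an ambient type `α`), a set `E` of
edges (in an ambient type `β`), and an incidence function assigning to each edge an
unordered pair of endpoints; loop-edges and parallel edges are allowed. -/
structure Graph (α : Type u) (β : Type v) where
  V : Set α
  E : Set β
  ends : β → Sym2 α
  finV : V.Finite
  finE : E.Finite
  ends_mem : ∀ ⦃e⦄, e ∈ E → ∀ ⦃x⦄, x ∈ ends e → x ∈ V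

namespace Graph

variable {α : Type u} {β : Type v}

/-- `e` is a loop-edge of `G` at the vertex `v`. -/
def IsLoopAt (G : Graph α β) (e : β) (v : α) : Prop :=
  e ∈ G.E ∧ G.ends e = Sym2.diag v

/-- `loops_G(v)`: the set of loop-edges of `G` at `v`. -/
def loopsAt (G : Graph α β) (v : α) : Set β := {e | G.IsLoopAt e v}

/-- Two vertices are adjacent if some edge of `G` has them as its two endpoints. -/
def Adj (G : Graph α β) (u v : α) : Prop := ∃ e ∈ G.E, G.ends e = s(u, v)

/-- A graph is connected if any two of its vertices are joined by a walk.
(The graph with no vertices is connected.) -/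
def Connected (G : Graph α β) : Prop :=
  ∀ u ∈ G.V, ∀ v ∈ G.V, Relation.ReflTransGen G.Adj u v

/-- Delete a set `X` of vertices: remove the vertices in `X` and all edges meeting `X`. -/
def deleteVertices (G : Graph α β) (X : Set α) : Graph α β where
  V := G.V \ X
  E := {e ∈ G.E | ∀ x ∈ G.ends e, x ∉ X}
  ends := G.ends
  finV := G.finV.sdiff
  finE := G.finE.subset (sep_subset _ _)
  ends_mem := fun e he x hx => ⟨G.ends_mem he.1 hx, he.2 x hx⟩

/-- `G − v`: delete the single vertex `v`. -/
abbrev deleteVertex (G : Graph α β) (v : α) : Graph α β := G.deleteVertices {v}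

/-- `G − e`: delete the edge `e` (keeping all vertices). -/
def deleteEdge (G : Graph α β) (e : β) : Graph α β where
  V := G.V
  E := G.E \ {e}
  ends := G.ends
  finV := G.finV
  finE := G.finE.sdiff
  ends_mem := fun f hf x hx => G.ends_mem hf.1 hx

/-- `G[X]`: the subgraph of `G` with edge set `X` (intersected with `E(G)`) and
no isolated vertices. -/
def restrictEdges (G : Graph α β) (X : Set β) : Graph α β where
  V := {v | ∃ e ∈ X ∩ G.E, v ∈ G.ends e}
  E := X ∩ G.E
  ends := G.ends
  finV := G.finV.subset (by rintro v ⟨e, ⟨-, he⟩, hv⟩; exact G.ends_mem he hv)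
  finE := G.finE.subset inter_subset_right
  ends_mem := fun e he x hx => ⟨e, he, hx⟩

/-- The connected component of `G` containing the vertex `v`, as a graph. -/
def componentOf (G : Graph α β) (v : α) : Graph α β where
  V := {u ∈ G.V | Relation.ReflTransGen G.Adj v u}
  E := {e ∈ G.E | ∀ x ∈ G.ends e, Relation.ReflTransGen G.Adj v x}
  ends := G.ends
  finV := G.finV.subset (sep_subset _ _)
  finE := G.finE.subset (sep_subset _ _)
  ends_mem := fun e he x hx => ⟨G.ends_mem he.1 hx, he.2 x hx⟩

/-- `H` is a connected component of `G`. -/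
def IsComponentOf (H G : Graph α β) : Prop := ∃ v ∈ G.V, H = G.componentOf v

/-- The number of connected components of `G`. -/
noncomputable def ncomponents (G : Graph α β) : ℕ :=
  {H : Graph α β | H.IsComponentOf G}.ncard

/-- `G` has at most two connected components: among any three vertices, two are joined. -/
def AtMostTwoComponents (G : Graph α β) : Prop :=
  ∀ u ∈ G.V, ∀ v ∈ G.V, ∀ w ∈ G.V,
    Relation.ReflTransGen G.Adj u v ∨ Relation.ReflTransGen G.Adj u w ∨
      Relation.ReflTransGen G.Adj v w

/-- The degree of a vertex: loop-edges count twice. -/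
noncomputable def degree (G : Graph α β) (v : α) : ℕ :=
  ({e ∈ G.E | v ∈ G.ends e ∧ ¬ (G.ends e).IsDiag}).ncard +
    2 * ({e ∈ G.E | G.ends e = Sym2.diag v}).ncard

/-- `G` is a cycle: it is connected, has at least one edge, and every vertex has
degree two. -/
def IsCycleGraph (G : Graph α β) : Prop :=
  G.E.Nonempty ∧ G.Connected ∧ ∀ v ∈ G.V, G.degree v = 2

/-- `C` is (the edge set of) a cycle of `G`. -/
def CycleSet (G : Graph α β) (C : Set β) : Prop :=
  C ⊆ G.E ∧ (G.restrictEdges C).IsCycleGraph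

/-- A forest: a graph with no cycles (in particular no loop-edges). -/
def IsForest (G : Graph α β) : Prop := ∀ C, ¬ G.CycleSet C

/-- `H` is a subgraph of `G`. -/
def IsSubgraph (H G : Graph α β) : Prop := H.V ⊆ G.V ∧ H.E ⊆ G.E ∧ H.ends = G.ends

/-- `G` is `k`-connected if `G − X` is connected for every vertex set `X` with `|X| < k`. -/
def KConnected (G : Graph α β) (k : ℕ) : Prop :=
  ∀ X : Set α, X.encard < k → (G.deleteVertices X).Connected

/-- A theta: a `2`-connected graph with exactly two vertices of degree three, all
other vertices having degree two. -/
def IsTheta (H : Graph α β) : Prop :=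
  H.KConnected 2 ∧
    ∃ a ∈ H.V, ∃ b ∈ H.V, a ≠ b ∧ H.degree a = 3 ∧ H.degree b = 3 ∧
      ∀ v ∈ H.V, v ≠ a → v ≠ b → H.degree v = 2

/-- `G / e`: contract the non-loop edge `e` with endpoints `x` and `y`
(identifying `y` with `x` and deleting `e`). -/
noncomputable def contractEdge (G : Graph α β) (e : β) (x y : α) (he : e ∈ G.E)
    (hxy : G.ends e = s(x, y)) (hne : x ≠ y) : Graph α β where
  V := G.V \ {y}
  E := G.E \ {e}
  ends := fun f => (G.ends f).map (fun w => if w = y then x else w)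
  finV := G.finV.sdiff
  finE := G.finE.sdiff
  ends_mem := by
    rintro f ⟨hf, -⟩ z hz
    try dsimp only at hz
    rw [Sym2.mem_map] at hz
    obtain ⟨w, hw, rfl⟩ := hz
    by_cases hwy : w = y
    · rw [if_pos hwy]
      have hx : x ∈ G.ends e := by rw [hxy]; exact Sym2.mem_mk_left x y
      exact ⟨G.ends_mem he hx, by simp [hne]⟩
    · rw [if_neg hwy]
      exact ⟨G.ends_mem hf hw, by simp [hwy]⟩

/-- `G ∘ e`: for a loop-edge `e` at a vertex `v` which is the unique loop-edge at `v`,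
delete `v` and `e`, and replace every other edge `f = vw` at `v` by a loop-edge at `w`. -/
noncomputable def circ (G : Graph α β) (e : β) (v : α)
    (hno : ∀ f ∈ G.E, G.ends f = Sym2.diag v → f = e) : Graph α β where
  V := G.V \ {v}
  E := G.E \ {e}
  ends := fun f =>
    if h : f ∈ G.E ∧ f ≠ e ∧ v ∈ G.ends f then Sym2.diag (Sym2.Mem.other h.2.2)
    else G.ends f
  finV := G.finV.sdiff
  finE := G.finE.sdiff
  ends_mem := by
    rintro f ⟨hf, hfe⟩ z hz
    try dsimp only at hz
    have hfe' : f ≠ e := fun h' => hfe (by simp [h'])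
    by_cases h : f ∈ G.E ∧ f ≠ e ∧ v ∈ G.ends f
    · rw [dif_pos h] at hz
      have hze : z = Sym2.Mem.other h.2.2 := by
        have h2 : z ∈ s(Sym2.Mem.other h.2.2, Sym2.Mem.other h.2.2) := hz
        rw [Sym2.mem_iff] at h2
        tauto
      subst hze
      refine ⟨G.ends_mem hf (Sym2.other_mem h.2.2), ?_⟩
      simp only [mem_singleton_iff]
      intro hzv
      apply h.2.1
      apply hno f hf
      show G.ends f = s(v, v)
      rw [← Sym2.other_spec h.2.2, hzv]
    · rw [dif_neg h] at hz
      refine ⟨G.ends_mem hf hz, ?_⟩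
      simp only [mem_singleton_iff]
      intro hzv
      subst hzv
      exact h ⟨hf, hfe', hz⟩

end Graph

/-! ### Matroid notions -/

variable {α : Type u} {β : Type v}

/-- The rank `r_M(X)` of a set `X` in a matroid `M`: the maximum size of an
independent subset of `X`. -/
noncomputable def rank (M : Matroid β) (X : Set β) : ℕ :=
  (⨆ I ∈ {I : Set β | M.Indep I ∧ I ⊆ X}, I.encard).toNat

/-- `C` is a circuit of `M` : a minimal dependent set. -/
def IsCircuit (M : Matroid β) (C : Set β) : Prop :=
  M.Dep C ∧ ∀ D, D ⊂ C → M.Indep D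

/-- `M \ D` : delete the set `D` from the matroid `M`. -/
def deleteM (M : Matroid β) (D : Set β) : Matroid β := M ↾ (M.E \ D)

/-- `M / C` : contract the set `C` in the matroid `M`. -/
def contractM (M : Matroid β) (C : Set β) : Matroid β := (M✶ ↾ (M✶.E \ C))✶

/-- `G` is a weak framework for `M`: conditions (1)–(3). -/
def WeakFramework (G : Graph α β) (M : Matroid β) : Prop :=
  G.E = M.E ∧
  (∀ H : Graph α β, H.IsComponentOf G → rank M H.E ≤ H.V.ncard) ∧
  (∀ v ∈ G.V,
    M.closure (G.deleteVertex v).E ⊆ (G.deleteVertex v).E ∪ G.loopsAt v)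

/-- `G` is a framework for `M`: conditions (1)–(4). -/
def Framework (G : Graph α β) (M : Matroid β) : Prop :=
  WeakFramework G M ∧
    ∀ C, IsCircuit M C → (G.restrictEdges C).AtMostTwoComponents

/-- `M` is the cycle matroid `M(G)` of `G` : the ground set of `M` is `E(G)`, and the
circuits of `M` are exactly the edge sets of cycles of `G`. -/
def IsCycleMatroidOf (G : Graph α β) (M : Matroid β) : Prop :=
  M.E = G.E ∧ ∀ C, IsCircuit M C ↔ G.CycleSet C

/-- A matroid is graphic if it is the cycle matroid of some graph. -/
def Graphic (M : Matroid β) : Prop :=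
  ∃ (γ : Type v) (G : Graph γ β), IsCycleMatroidOf G M

/-- A matroid is quasi-graphic if it has a framework. -/
def QuasiGraphic (M : Matroid β) : Prop :=
  ∃ (γ : Type v) (G : Graph γ β), Framework G M

/-- `M` is a lift of `N` if some single-element extension `M'` of `M` satisfies
`M' \ e = M` and `M' / e = N`. -/
def IsLiftOf (M N : Matroid β) : Prop :=
  ∃ M' : Matroid (Option β), (none : Option β) ∈ M'.E ∧
    deleteM M' {none} = M.map some (Option.some_injective β).injOn ∧
    contractM M' {none} = N.map some (Option.some_injective β).injOn

/-- `M` is a lifted-graphic matroid: for some single-element extension `M'` of `M`,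
`M' / e` is graphic. -/
def LiftedGraphic (M : Matroid β) : Prop :=
  ∃ M' : Matroid (Option β), (none : Option β) ∈ M'.E ∧
    deleteM M' {none} = M.map some (Option.some_injective β).injOn ∧
    Graphic (contractM M' {none})

/-- `(M, V)` is a framed matroid: `V` is a basis of `M` and every element of `M` is
spanned by a subset of `V` with at most two elements. -/
def FramedMatroid {γ : Type u} (M : Matroid γ) (V : Set γ) : Prop :=
  M.IsBase V ∧ ∀ e ∈ M.E, ∃ S ⊆ V, S.ncard ≤ 2 ∧ e ∈ M.closure S

/-- `M` is a frame matroid: `M = M' \ V` for some framed matroid `(M', V)`. -/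
def FrameMatroid (M : Matroid β) : Prop :=
  ∃ (γ : Type v) (M' : Matroid (β ⊕ γ)) (V : Set (β ⊕ γ)),
    FramedMatroid M' V ∧
      deleteM M' V = M.map Sum.inl Sum.inl_injective.injOn

/-- `M` is `3`-connected: it has no `k`-separation for `k ≤ 2`. -/
def ThreeConnected (M : Matroid β) : Prop :=
  ∀ X ⊆ M.E, ∀ k : ℕ, k ≤ 2 → (k : ℕ∞) ≤ X.encard → (k : ℕ∞) ≤ (M.E \ X).encard →
    rank M M.E + k ≤ rank M X + rank M (M.E \ X)

/-- `M` is representable over some field. -/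
def Representable (M : Matroid β) : Prop :=
  ∃ (F : Type v) (_ : Field F) (W : Type v) (_ : AddCommGroup W) (_ : Module F W)
    (φ : β → W), ∀ I ⊆ M.E, (M.Indep I ↔ LinearIndependent F (fun x : I => φ x))

/-- A collection `B` of cycles of `G` satisfies the theta-property if there is no
theta-subgraph of `G` with exactly two of its three cycles in `B`. -/
def ThetaProperty (G : Graph α β) (B : Set (Set β)) : Prop :=
  ∀ H : Graph α β, H.IsSubgraph G → H.IsTheta →
    ∀ C1 C2 C3, H.CycleSet C1 → H.CycleSet C2 → H.CycleSet C3 →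
      C1 ≠ C2 → C2 ≠ C3 → C1 ≠ C3 → C1 ∈ B → C2 ∈ B → C3 ∈ B

end QuasiGraphicPaper

/-!
Write `M = M' ＼ e` and `N = M' ／ e`. Then `cl_M X ⊆ cl_N X`; every `M`-independent `I`
contains an `N`-independent `J` with `|I| ≤ |J| + 1`; and two disjoint `N`-dependent sets
`X`, `Y` have an `M`-dependent union, since otherwise `e ∈ cl X ∩ cl Y = cl (X ∩ Y) = cl ∅`
in `M'`.

By the first fact each element `f` of an `M`-circuit `K` lies on a cycle of `G` inside `K`, so
no edge of `K` is pendant in `G[K]`; this gives condition (3). In a nonempty forest the last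
edge of a longest path is pendant, so every component of `G[K]` contains a cycle. Three
components would give two disjoint cycles inside a proper, hence independent, subset of `K`,
contradicting the third fact: this is (4). Condition (2) follows from the second fact and
`|J| < |V(G[J])|` for forests `J`, and the last claim is the third fact again.
-/

namespace Sym2

variable {α : Type*} {x : α}

lemma exists_mem (z : Sym2 α) : ∃ x, x ∈ z :=
  z.ind fun x y => ⟨x, mem_mk_left x y⟩

lemma mem_diag_iff {y : α} : y ∈ diag x ↔ y = x := by
  rw [diag, mem_iff, or_self]

lemma eq_diag_of_isDiag_of_mem {z : Sym2 α} (hz : z.IsDiag) (hx : x ∈ z) :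
    z = diag x := by
  obtain ⟨y, rfl⟩ := mem_iff_exists.mp hx
  rw [mk_isDiag_iff.mp hz]
  rfl

end Sym2

namespace Matroid

variable {γ : Type*} {M : Matroid γ} {e : γ} {D X Y I : Set γ}

lemma closure_delete_subset_closure_contract (M : Matroid γ) (D X : Set γ) :
    (M ＼ D).closure X ⊆ (M ／ D).closure X := by
  rw [delete_closure_eq, contract_closure_eq]
  exact sdiff_subset_sdiff_left (M.closure_subset_closure (sdiff_subset.trans subset_union_left))

lemma Indep.exists_subset_contract_indep (hI : (M ＼ D).Indep I) :
    ∃ J ⊆ I, (M ／ D).Indep J ∧ I.encard ≤ J.encard + D.encard := by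
  rw [delete_indep_iff] at hI
  obtain ⟨J, hJ⟩ := (M ／ D).exists_isBasis I
    (subset_sdiff.mpr ⟨hI.1.subset_ground, hI.2⟩)
  have hIJ : I ⊆ M.closure (J ∪ D) := fun x hx =>
    (contract_closure_eq M D J ▸ hJ.subset_closure hx).1
  refine ⟨J, hJ.subset, hJ.indep, ?_⟩
  calc I.encard = M.eRk I := hI.1.eRk_eq_encard.symm
    _ ≤ M.eRk (M.closure (J ∪ D)) := M.eRk_mono hIJ
    _ = M.eRk (J ∪ D) := M.eRk_closure_eq _
    _ ≤ (J ∪ D).encard := M.eRk_le_encard _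
    _ ≤ J.encard + D.encard := encard_union_le J D

lemma Dep.union_delete_of_contract (he : e ∈ M.E) (hX : (M ／ {e}).Dep X)
    (hY : (M ／ {e}).Dep Y) (hXY : Disjoint X Y) : (M ＼ {e}).Dep (X ∪ Y) := by
  refine ((M ＼ {e}).not_indep_iff (union_subset hX.subset_ground hY.subset_ground)).mp
    fun hind => ?_
  rw [delete_indep_iff] at hind
  by_cases hloop : M.IsLoop e
  · rw [contract_eq_delete_of_subset_loops (singleton_subset_iff.mpr hloop)] at hX
    exact hX.not_indep (delete_indep_iff.mpr
      ⟨hind.1.subset subset_union_left, hind.2.mono_left subset_union_left⟩)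
  have hnl : M.IsNonloop e := isNonloop_of_not_isLoop he hloop
  have hcl : ∀ Z ⊆ X ∪ Y, (M ／ {e}).Dep Z → e ∈ M.closure Z := by
    intro Z hZ hZd
    have heZ : e ∉ Z := fun h => hind.2.notMem_of_mem_left (hZ h) rfl
    have hZi : M.Indep Z := hind.1.subset hZ
    by_contra hecl
    exact hZd.not_indep (hnl.contractElem_indep_iff.mpr
      ⟨heZ, (hZi.insert_indep_iff_of_notMem heZ).mpr ⟨he, hecl⟩⟩)
  have hXYcl := hind.1.closure_inter_eq_inter_closure
  rw [hXY.inter_eq] at hXYcl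
  exact hloop (show e ∈ M.closure ∅ from
    hXYcl ▸ ⟨hcl X subset_union_left hX, hcl Y subset_union_right hY⟩)

end Matroid

namespace QuasiGraphicPaper

universe u v

variable {α : Type u} {β : Type v}

lemma isCircuit_iff_isCircuit {M : Matroid β} {C : Set β} : IsCircuit M C ↔ M.IsCircuit C :=
  isCircuit_iff_forall_ssubset.symm

lemma rank_le_of_forall_indep_encard_le {M : Matroid β} {X : Set β} {n : ℕ}
    (h : ∀ I, M.Indep I → I ⊆ X → I.encard ≤ n) : rank M X ≤ n :=
  ENat.toNat_le_of_le_natCast (iSup₂_le fun I hI => h I hI.1 hI.2)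

section Lift

variable {M N : Matroid β} {X Y I K : Set β}

lemma IsLiftOf.exists_eq_comap (h : IsLiftOf M N) :
    ∃ S : Matroid (Option β), none ∈ S.E ∧
      M = (S ＼ {none}).comap some ∧ N = (S ／ {none}).comap some := by
  obtain ⟨S, hnone, hdel, hcon⟩ := h
  refine ⟨S, hnone, ?_, ?_⟩
  · rw [show S ＼ {none} = _ from hdel, comap_map (Option.some_injective β)]
  · rw [show S ／ {none} = _ from hcon, comap_map (Option.some_injective β)]

lemma comap_some_dep_iff {P : Matroid (Option β)} :
    (P.comap some).Dep X ↔ P.Dep (some '' X) := by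
  simp [comap_dep_iff, (Option.some_injective β).injOn]

lemma IsLiftOf.ground_eq (h : IsLiftOf M N) : M.E = N.E := by
  obtain ⟨S, -, rfl, rfl⟩ := h.exists_eq_comap
  rfl

lemma IsLiftOf.closure_subset (h : IsLiftOf M N) (X : Set β) : M.closure X ⊆ N.closure X := by
  obtain ⟨S, -, rfl, rfl⟩ := h.exists_eq_comap
  simp only [comap_closure_eq]
  exact preimage_mono (closure_delete_subset_closure_contract S {none} _)

lemma IsLiftOf.exists_subset_indep (h : IsLiftOf M N) (hI : M.Indep I) :
    ∃ J ⊆ I, N.Indep J ∧ I.encard ≤ J.encard + 1 := by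
  obtain ⟨S, -, rfl, rfl⟩ := h.exists_eq_comap
  obtain ⟨J', hJ'I, hJ', hcard⟩ := (comap_indep_iff.mp hI).1.exists_subset_contract_indep
  have hJ'eq : some '' (some ⁻¹' J') = J' :=
    image_preimage_eq_of_subset (hJ'I.trans (image_subset_range _ _))
  refine ⟨some ⁻¹' J', fun x hx => ?_, comap_indep_iff.mpr
    ⟨by rwa [hJ'eq], (Option.some_injective β).injOn⟩, ?_⟩
  · obtain ⟨y, hy, hyx⟩ := hJ'I hx
    exact Option.some_injective β hyx ▸ hy
  · rw [← (Option.some_injective β).encard_image, ← (Option.some_injective β).encard_image,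
      hJ'eq, ← encard_singleton (none : Option β)]
    exact hcard

lemma IsLiftOf.dep_union (h : IsLiftOf M N) (hX : N.Dep X) (hY : N.Dep Y)
    (hXY : Disjoint X Y) : M.Dep (X ∪ Y) := by
  obtain ⟨S, hnone, rfl, rfl⟩ := h.exists_eq_comap
  rw [comap_some_dep_iff] at hX hY ⊢
  rw [image_union]
  exact hX.union_delete_of_contract hnone hY
    ((disjoint_image_iff (Option.some_injective β)).mpr hXY)

lemma IsLiftOf.exists_isCircuit_subset (h : IsLiftOf M N) (hK : M.IsCircuit K) {f : β}
    (hf : f ∈ K) : ∃ C ⊆ K, N.IsCircuit C ∧ f ∈ C := by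
  have hfcl := h.closure_subset _ (hK.mem_closure_sdiff_singleton_of_mem hf)
  obtain ⟨C, hCK, hC, hfC⟩ := exists_isCircuit_of_mem_closure hfcl (fun h => h.2 rfl)
  exact ⟨C, hCK.trans (by rw [insert_sdiff_singleton, insert_eq_of_mem hf]), hC, hfC⟩

end Lift

namespace Graph

open Function

variable {G : Graph α β} {J K Z : Set β} {f g : β} {u x : α}

lemma restrictEdges_E_of_subset (hJ : J ⊆ G.E) : (G.restrictEdges J).E = J :=
  inter_eq_left.mpr hJ

lemma degree_restrictEdges (hJ : J ⊆ G.E) (x : α) :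
    (G.restrictEdges J).degree x =
      {e ∈ J | x ∈ G.ends e ∧ ¬ (G.ends e).IsDiag}.ncard +
        2 * {e ∈ J | G.ends e = Sym2.diag x}.ncard := by
  rw [degree, restrictEdges_E_of_subset hJ]
  rfl

lemma cycleSet_singleton (hg : g ∈ G.E) (hx : G.ends g = Sym2.diag x) : G.CycleSet {g} := by
  refine ⟨by simpa, ⟨g, rfl, hg⟩, ?_, ?_⟩
  · rintro y ⟨g₁, ⟨hg₁, -⟩, hy⟩ z ⟨g₂, ⟨hg₂, -⟩, hz⟩
    rw [mem_singleton_iff.mp hg₁, hx, Sym2.mem_diag_iff] at hy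
    rw [mem_singleton_iff.mp hg₂, hx, Sym2.mem_diag_iff] at hz
    rw [hy, hz]
  · rintro y ⟨g₁, ⟨hg₁, -⟩, hy⟩
    rw [mem_singleton_iff.mp hg₁, hx, Sym2.mem_diag_iff] at hy
    subst y
    rw [degree_restrictEdges (by simpa)]
    have h1 : {e ∈ ({g} : Set β) | x ∈ G.ends e ∧ ¬ (G.ends e).IsDiag} = ∅ :=
      eq_empty_of_forall_notMem fun _ ⟨h, _, hnd⟩ =>
        hnd (mem_singleton_iff.mp h ▸ hx ▸ Sym2.diag_isDiag x)
    have h2 : {e ∈ ({g} : Set β) | G.ends e = Sym2.diag x} = {g} :=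
      ext fun _ => ⟨And.left, fun h => ⟨h, mem_singleton_iff.mp h ▸ hx⟩⟩
    rw [h1, h2, ncard_empty, ncard_singleton]

section Cyclic

variable {n : ℕ} {v : Fin (n + 2) → α} {e : Fin (n + 2) → β}

lemma restrictEdges_range_V (heE : ∀ i, e i ∈ G.E)
    (hends : ∀ i, G.ends (e i) = s(v i, v (i + 1))) :
    (G.restrictEdges (range e)).V = range v := by
  ext x
  constructor
  · rintro ⟨_, ⟨⟨i, rfl⟩, -⟩, hx⟩
    rw [hends i, Sym2.mem_iff] at hx
    rcases hx with rfl | rfl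
    exacts [⟨i, rfl⟩, ⟨i + 1, rfl⟩]
  · rintro ⟨i, rfl⟩
    exact ⟨e i, ⟨⟨i, rfl⟩, heE i⟩, hends i ▸ Sym2.mem_mk_left _ _⟩

open Fin.NatCast in
lemma connected_restrictEdges_range (heE : ∀ i, e i ∈ G.E)
    (hends : ∀ i, G.ends (e i) = s(v i, v (i + 1))) :
    (G.restrictEdges (range e)).Connected := by
  have hstep : ∀ i k : ℕ, Relation.ReflTransGen (G.restrictEdges (range e)).Adj
      (v i) (v ((i + k : ℕ) : Fin (n + 2))) := by
    intro i k
    induction k with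
    | zero => exact .refl
    | succ k ih =>
      refine ih.tail ⟨e (i + k : ℕ), ⟨⟨_, rfl⟩, heE _⟩, ?_⟩
      show G.ends _ = _
      rw [hends, ← add_assoc, Nat.cast_add_one]
  rw [Connected, restrictEdges_range_V heE hends]
  rintro _ ⟨i, rfl⟩ _ ⟨j, rfl⟩
  simpa [Nat.cast_add] using hstep i (j - i : Fin (n + 2)).val

lemma degree_restrictEdges_range (hv : Injective v) (he : Injective e) (heE : ∀ i, e i ∈ G.E)
    (hends : ∀ i, G.ends (e i) = s(v i, v (i + 1))) (i : Fin (n + 2)) :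
    (G.restrictEdges (range e)).degree (v i) = 2 := by
  have hsucc : ∀ j : Fin (n + 2), j + 1 ≠ j := fun j h => one_ne_zero (add_eq_left.mp h)
  have hnd : ∀ j, ¬ (G.ends (e j)).IsDiag := fun j h =>
    hsucc j (hv (Sym2.mk_isDiag_iff.mp (hends j ▸ h))).symm
  have hmem : ∀ j, v i ∈ G.ends (e j) ↔ j = i ∨ j = i - 1 := by
    intro j
    rw [hends, Sym2.mem_iff, hv.eq_iff, hv.eq_iff, eq_sub_iff_add_eq, eq_comm, eq_comm (a := i)]
  have h1 : {x ∈ range e | v i ∈ G.ends x ∧ ¬ (G.ends x).IsDiag} = {e i, e (i - 1)} := by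
    ext x
    constructor
    · rintro ⟨⟨j, rfl⟩, hj, -⟩
      rcases (hmem j).mp hj with rfl | rfl
      exacts [Or.inl rfl, Or.inr rfl]
    · rintro (rfl | rfl)
      exacts [⟨⟨i, rfl⟩, (hmem i).mpr (Or.inl rfl), hnd i⟩,
        ⟨⟨i - 1, rfl⟩, (hmem _).mpr (Or.inr rfl), hnd _⟩]
  have h2 : {x ∈ range e | G.ends x = Sym2.diag (v i)} = ∅ :=
    eq_empty_of_forall_notMem fun _ ⟨⟨j, hj⟩, hd⟩ =>
      hnd j (hj ▸ hd ▸ Sym2.diag_isDiag _)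
  have hne : e i ≠ e (i - 1) := he.ne fun h => hsucc (i - 1) (by rw [sub_add_cancel, ← h])
  rw [degree_restrictEdges (range_subset_iff.mpr heE), h1, h2, ncard_pair hne, ncard_empty]

lemma cycleSet_range (hv : Injective v) (he : Injective e) (heE : ∀ i, e i ∈ G.E)
    (hends : ∀ i, G.ends (e i) = s(v i, v (i + 1))) : G.CycleSet (range e) := by
  refine ⟨range_subset_iff.mpr heE, ⟨e 0, ⟨0, rfl⟩, heE 0⟩,
    connected_restrictEdges_range heE hends, ?_⟩
  rw [restrictEdges_range_V heE hends]
  rintro _ ⟨i, rfl⟩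
  exact degree_restrictEdges_range hv he heE hends i

end Cyclic

def IsPendantEdge (G : Graph α β) (J : Set β) (f : β) (u : α) : Prop :=
  f ∈ J ∧ u ∈ G.ends f ∧ ¬ (G.ends f).IsDiag ∧ ∀ g ∈ J, u ∈ G.ends g → g = f

lemma IsPendantEdge.subset (h : G.IsPendantEdge K f u) (hZK : Z ⊆ K) (hf : f ∈ Z) :
    G.IsPendantEdge Z f u :=
  ⟨hf, h.2.1, h.2.2.1, fun g hg => h.2.2.2 g (hZK hg)⟩

lemma IsPendantEdge.degree_eq_one (h : G.IsPendantEdge J f u) (hJ : J ⊆ G.E) :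
    (G.restrictEdges J).degree u = 1 := by
  obtain ⟨hf, huf, hnd, honly⟩ := h
  have h1 : {g ∈ J | u ∈ G.ends g ∧ ¬ (G.ends g).IsDiag} = {f} :=
    ext fun g => ⟨fun hg => honly g hg.1 hg.2.1,
      fun hg => (mem_singleton_iff.mp hg) ▸ ⟨hf, huf, hnd⟩⟩
  have h2 : {g ∈ J | G.ends g = Sym2.diag u} = ∅ := by
    refine eq_empty_of_forall_notMem fun g ⟨hg, hgu⟩ => hnd ?_
    rw [← honly g hg (hgu ▸ Sym2.mem_mk_left u u), hgu]
    exact Sym2.diag_isDiag u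
  rw [degree_restrictEdges hJ, h1, h2, ncard_singleton, ncard_empty]

lemma CycleSet.not_isPendantEdge (hZ : G.CycleSet Z) : ¬ G.IsPendantEdge Z f u := fun h => by
  have hdeg := hZ.2.2.2 u ⟨f, ⟨h.1, hZ.1 h.1⟩, h.2.1⟩
  rw [h.degree_eq_one hZ.1] at hdeg
  omega

/-- The path `v 0, e 0, v 1, …, e (k - 1), v k`; later values of `v` and `e` play no role. -/
def IsPath (G : Graph α β) (J : Set β) (v : ℕ → α) (e : ℕ → β) (k : ℕ) : Prop :=
  InjOn v (Iic k) ∧ ∀ i < k, e i ∈ J ∧ G.ends (e i) = s(v i, v (i + 1))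

section Path

variable {v : ℕ → α} {e : ℕ → β} {k : ℕ}

lemma IsPath.injOn_edges (h : G.IsPath J v e k) : InjOn e (Iio k) := by
  intro a (ha : a < k) b (hb : b < k) hab
  have hends := (h.2 a ha).2
  rw [hab, (h.2 b hb).2, Sym2.eq_iff] at hends
  have hinj : ∀ {c d}, c ≤ k → d ≤ k → v c = v d → c = d := fun hc hd => h.1 hc hd
  rcases hends with ⟨h1, -⟩ | ⟨h1, h2⟩
  · exact (hinj hb.le ha.le h1).symm
  · have := hinj hb.le (by omega : a + 1 ≤ k) h1
    have := hinj (by omega : b + 1 ≤ k) ha.le h2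
    omega

lemma IsPath.exists_cycleSet (h : G.IsPath J v e k) (hJ : J ⊆ G.E) {i : ℕ} (hi : i ≤ k)
    (hg : g ∈ J) (hgends : G.ends g = s(v k, v i)) (hge : ∀ j < k, e j ≠ g) :
    ∃ Z ⊆ J, G.CycleSet Z := by
  rcases hi.eq_or_lt with rfl | hik
  · exact ⟨{g}, singleton_subset_iff.mpr hg, cycleSet_singleton (hJ hg) hgends⟩
  obtain ⟨n, rfl⟩ : ∃ n, k = i + n + 1 := ⟨k - i - 1, by omega⟩
  have hlast : ∀ j : Fin (n + 2), ¬ (j : ℕ) ≤ n → j = Fin.last (n + 1) :=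
    fun j hj => Fin.ext (by simp only [Fin.val_last]; omega)
  set e' : Fin (n + 2) → β := fun j => if (j : ℕ) ≤ n then e (i + j) else g with he'
  have he'J : ∀ j, e' j ∈ J := fun j => by
    simp only [he']
    split_ifs with hj
    exacts [(h.2 _ (by omega)).1, hg]
  refine ⟨range e', range_subset_iff.mpr he'J, cycleSet_range (v := fun j => v (i + j))
    (fun a b hab => Fin.ext (by have := h.1 (by simp; omega) (by simp; omega) hab; omega))
    (fun a b hab => ?_) (fun j => hJ (he'J j)) (fun j => ?_)⟩
  · simp only [he'] at hab
    split_ifs at hab with ha hb hb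
    · exact Fin.ext (by have := h.injOn_edges (by simp; omega) (by simp; omega) hab; omega)
    · exact absurd hab (hge _ (by omega))
    · exact absurd hab.symm (hge _ (by omega))
    · rw [hlast a ha, hlast b hb]
  · simp only [he']
    split_ifs with hj
    · rw [(h.2 _ (by omega)).2, Fin.val_add_one_of_lt (by rw [Fin.lt_def, Fin.val_last]; omega)]
      rfl
    · rw [hlast j hj, Fin.last_add_one, hgends]
      simp [add_assoc]

lemma IsPath.snoc (h : G.IsPath J v e k) (hg : g ∈ J) {w : α} (hgends : G.ends g = s(v k, w))
    (hw : ∀ i ≤ k, v i ≠ w) : G.IsPath J (update v (k + 1) w) (update e k g) (k + 1) := by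
  constructor
  · intro a (ha : a ≤ k + 1) b (hb : b ≤ k + 1) hab
    simp only [update_apply] at hab
    split_ifs at hab with h1 h2 h2
    · omega
    · exact absurd hab.symm (hw b (by omega))
    · exact absurd hab (hw a (by omega))
    · exact h.1 (show a ≤ k by omega) (show b ≤ k by omega) hab
  · intro i hi
    rcases Nat.lt_succ_iff_lt_or_eq.mp hi with hi | rfl
    · rw [update_of_ne hi.ne, update_of_ne (by omega : i ≠ k + 1),
        update_of_ne (by omega : i + 1 ≠ k + 1)]
      exact h.2 i hi
    · simp [hg, hgends]

lemma IsPath.add_two_le_ncard (h : G.IsPath J v e (k + 1)) (hJ : J ⊆ G.E) :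
    k + 2 ≤ G.V.ncard := by
  have hV : v '' Iic (k + 1) ⊆ G.V := by
    rintro _ ⟨i, hi, rfl⟩
    rcases Nat.lt_or_ge i (k + 1) with hik | hik
    · have := (h.2 i hik).2 ▸ Sym2.mem_mk_left (v i) (v (i + 1))
      exact G.ends_mem (hJ (h.2 i hik).1) this
    · obtain rfl : i = k + 1 := le_antisymm hi hik
      have := (h.2 k k.lt_succ_self).2 ▸ Sym2.mem_mk_right (v k) (v (k + 1))
      exact G.ends_mem (hJ (h.2 k k.lt_succ_self).1) this
  calc k + 2 = (v '' Iic (k + 1)).ncard := by rw [h.1.ncard_image, ncard_Iic_nat]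
    _ ≤ G.V.ncard := ncard_le_ncard hV G.finV

lemma IsPath.exists_extend (h : G.IsPath J v e (k + 1)) (hJ : J ⊆ G.E)
    (hacyc : ∀ Z ⊆ J, ¬ G.CycleSet Z) (hnp : ¬ G.IsPendantEdge J (e k) (v (k + 1))) :
    ∃ v' e', G.IsPath J v' e' (k + 2) := by
  have hinj : ∀ {c d}, c ≤ k + 1 → d ≤ k + 1 → v c = v d → c = d :=
    fun hc hd => h.1 hc hd
  obtain ⟨hfJ, hf⟩ := h.2 k k.lt_succ_self
  have hnd : ¬ (G.ends (e k)).IsDiag := by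
    rw [hf, Sym2.mk_isDiag_iff]
    exact fun h' => by have := hinj k.le_succ le_rfl h'; omega
  obtain ⟨g, hgJ, hxg, hgf⟩ : ∃ g ∈ J, v (k + 1) ∈ G.ends g ∧ g ≠ e k := by
    by_contra hcon
    push Not at hcon
    exact hnp ⟨hfJ, hf ▸ Sym2.mem_mk_right _ _, hnd, hcon⟩
  obtain ⟨w, hw⟩ := Sym2.mem_iff_exists.mp hxg
  by_cases hwp : ∃ i ≤ k + 1, v i = w
  · obtain ⟨i, hi, rfl⟩ := hwp
    refine absurd (h.exists_cycleSet hJ hi hgJ hw fun j hj hjg => ?_)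
      fun ⟨Z, hZJ, hZ⟩ => hacyc Z hZJ hZ
    rcases Nat.lt_succ_iff_lt_or_eq.mp hj with hj | rfl
    · rw [← hjg, (h.2 j (by omega)).2, Sym2.mem_iff] at hxg
      rcases hxg with hxj | hxj
      · have := hinj le_rfl (by omega) hxj; omega
      · have := hinj le_rfl (by omega) hxj; omega
    · exact hgf hjg.symm
  · push Not at hwp
    exact ⟨_, _, h.snoc hgJ hw hwp⟩

end Path

lemma exists_isPendantEdge (hJ : J ⊆ G.E) (hne : J.Nonempty)
    (hacyc : ∀ Z ⊆ J, ¬ G.CycleSet Z) :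
    ∃ f u, G.IsPendantEdge J f u := by
  by_contra hno
  push Not at hno
  obtain ⟨g, hg⟩ := hne
  obtain ⟨⟨x, y⟩, hxy⟩ := Quot.exists_rep (G.ends g)
  replace hxy : G.ends g = s(x, y) := hxy.symm
  have hxy_ne : x ≠ y := fun h => hacyc {g} (singleton_subset_iff.mpr hg)
    (cycleSet_singleton (hJ hg) (by rw [hxy, h]; rfl))
  have hpath : ∀ k, ∃ v e, G.IsPath J v e (k + 1) := by
    intro k
    induction k with
    | zero =>
      refine ⟨fun i => if i = 0 then x else y, fun _ => g, fun a ha b hb hab => ?_,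
        fun i hi => ?_⟩
      · simp only [mem_Iic, zero_add] at ha hb
        interval_cases a <;> interval_cases b <;> simp_all
      · obtain rfl : i = 0 := by omega
        simpa using ⟨hg, hxy⟩
    | succ k ih =>
      obtain ⟨v, e, h⟩ := ih
      exact h.exists_extend hJ hacyc (hno _ _)
  obtain ⟨v, e, h⟩ := hpath G.V.ncard
  have := h.add_two_le_ncard hJ
  omega

/- The extra vertex `w` makes the statement hold for `J = ∅`; when a pendant edge is removed
at `w` itself, the induction continues with its other end in place of `w`. -/
lemma ncard_add_one_le_ncard_insert (hJ : J ⊆ G.E) (hacyc : ∀ Z ⊆ J, ¬ G.CycleSet Z)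
    (w : α) :
    J.ncard + 1 ≤ (insert w (G.restrictEdges J).V).ncard := by
  induction hn : J.ncard generalizing J w with
  | zero => exact (ncard_pos ((G.restrictEdges J).finV.insert w)).mpr (insert_nonempty _ _)
  | succ n ih =>
    have hJfin : J.Finite := G.finE.subset hJ
    obtain ⟨f, u, hf, hu, hnd, honly⟩ := exists_isPendantEdge hJ
      (nonempty_of_ncard_ne_zero (by omega)) hacyc
    obtain ⟨y, hy⟩ := Sym2.mem_iff_exists.mp hu
    have hyu : y ≠ u := fun h => hnd (by rw [hy, h, Sym2.mk_isDiag_iff])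
    set V := insert w (G.restrictEdges J).V
    have hVu : u ∈ V := mem_insert_of_mem _ ⟨f, ⟨hf, hJ hf⟩, hu⟩
    obtain ⟨w', hw'u, hw'⟩ : ∃ w' ∈ V, w' ≠ u := by
      by_cases hwu : w = u
      · exact ⟨y, mem_insert_of_mem _ ⟨f, ⟨hf, hJ hf⟩, hy ▸ Sym2.mem_mk_right u y⟩,
          hyu⟩
      · exact ⟨w, mem_insert w _, hwu⟩
    have hsub : insert w' (G.restrictEdges (J \ {f})).V ⊆ V \ {u} := by
      refine insert_subset ⟨hw'u, hw'⟩ ?_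
      rintro z ⟨g, ⟨⟨hgJ, hgf⟩, hgE⟩, hz⟩
      exact ⟨mem_insert_of_mem _ ⟨g, ⟨hgJ, hgE⟩, hz⟩,
        fun (hzu : z = u) => hgf (honly g hgJ (hzu ▸ hz))⟩
    have hcard := ih (sdiff_subset.trans hJ) (fun Z hZ => hacyc Z (hZ.trans sdiff_subset)) w'
      (by rw [ncard_sdiff_singleton_of_mem hf]; omega)
    have hVfin : V.Finite := (G.restrictEdges J).finV.insert w
    have := ncard_le_ncard hsub hVfin.sdiff
    have := ncard_sdiff_singleton_add_one hVu hVfin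
    omega

section Components

variable {R : Graph α β} {a b : α}

instance : Std.Symm R.Adj := ⟨fun _ _ ⟨g, hg, he⟩ => ⟨g, hg, he ▸ Sym2.eq_swap⟩⟩

lemma mem_componentOf_E (hg : g ∈ R.E) (hx : x ∈ R.ends g)
    (hux : Relation.ReflTransGen R.Adj u x) : g ∈ (R.componentOf u).E := by
  refine ⟨hg, fun y hy => ?_⟩
  obtain ⟨x', hx'⟩ := Sym2.mem_iff_exists.mp hx
  rcases Sym2.mem_iff.mp (hx' ▸ hy) with rfl | rfl
  exacts [hux, hux.tail ⟨g, hg, hx'⟩]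

lemma disjoint_componentOf_E (h : ¬ Relation.ReflTransGen R.Adj a b) :
    Disjoint (R.componentOf a).E (R.componentOf b).E := by
  refine disjoint_left.mpr fun g ⟨_, hga⟩ ⟨_, hgb⟩ => ?_
  obtain ⟨x, hx⟩ := Sym2.exists_mem (R.ends g)
  exact h ((hga x hx).trans (symm (hgb x hx)))

end Components

lemma exists_cycleSet_subset_componentOf (hKG : K ⊆ G.E)
    (hnp : ∀ f x, ¬ G.IsPendantEdge K f x) (hu : u ∈ (G.restrictEdges K).V) :
    ∃ Z ⊆ ((G.restrictEdges K).componentOf u).E, G.CycleSet Z := by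
  set R := G.restrictEdges K
  by_contra hno
  push Not at hno
  obtain ⟨g, hg, hug⟩ := hu
  obtain ⟨f, x, hfA, hxf, hnd, honly⟩ := exists_isPendantEdge
    (fun g hg => hg.1.2) ⟨g, mem_componentOf_E (R := R) hg hug .refl⟩ hno
  refine hnp f x ⟨hfA.1.1, hxf, hnd, fun g' hg' hxg' => honly g' ?_ hxg'⟩
  exact mem_componentOf_E (R := R) ⟨hg', hKG hg'⟩ hxg' (hfA.2 x hxf)

end Graph

section CycleMatroidLift

variable {G : Graph α β} {M N : Matroid β} {K : Set β}

lemma IsCycleMatroidOf.dep (hN : IsCycleMatroidOf G N) {Z : Set β} (hZ : G.CycleSet Z) :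
    N.Dep Z :=
  ((hN.2 Z).mpr hZ).1

lemma IsLiftOf.ground_eq_edgeSet (h : IsLiftOf M N) (hN : IsCycleMatroidOf G N) : M.E = G.E :=
  h.ground_eq.trans hN.1

lemma IsLiftOf.not_isPendantEdge (h : IsLiftOf M N) (hN : IsCycleMatroidOf G N)
    (hK : M.IsCircuit K) {f : β} {u : α} : ¬ G.IsPendantEdge K f u := fun hp => by
  obtain ⟨C, hCK, hC, hfC⟩ := h.exists_isCircuit_subset hK hp.1
  exact ((hN.2 C).mp (isCircuit_iff_isCircuit.mpr hC)).not_isPendantEdge (hp.subset hCK hfC)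

lemma IsLiftOf.closure_deleteVertex_subset (h : IsLiftOf M N) (hN : IsCycleMatroidOf G N)
    (v : α) :
    M.closure (G.deleteVertex v).E ⊆ (G.deleteVertex v).E ∪ G.loopsAt v := by
  intro x hx
  by_cases hxX : x ∈ (G.deleteVertex v).E
  · exact Or.inl hxX
  have hxG : x ∈ G.E := h.ground_eq_edgeSet hN ▸ M.mem_ground_of_mem_closure hx
  have hvx : v ∈ G.ends x := by
    by_contra hvx
    exact hxX ⟨hxG, fun y hy (hyv : y = v) => hvx (hyv ▸ hy)⟩
  refine Or.inr ⟨hxG, by_contra fun hnd => ?_⟩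
  obtain ⟨K, hKX, hK, hxK⟩ := exists_isCircuit_of_mem_closure hx hxX
  refine h.not_isPendantEdge hN hK ⟨hxK, hvx,
    fun hd => hnd (Sym2.eq_diag_of_isDiag_of_mem hd hvx), fun g hg hvg => ?_⟩
  rcases hKX hg with rfl | hgX
  exacts [rfl, absurd rfl (hgX.2 v hvg)]

lemma IsLiftOf.rank_componentOf_le (h : IsLiftOf M N) (hN : IsCycleMatroidOf G N) {w : α}
    (hw : w ∈ G.V) : rank M (G.componentOf w).E ≤ (G.componentOf w).V.ncard := by
  refine rank_le_of_forall_indep_encard_le fun I hI hIH => ?_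
  obtain ⟨J, hJI, hJ, hcard⟩ := h.exists_subset_indep hI
  have hJG : J ⊆ G.E := hN.1 ▸ hJ.subset_ground
  have hacyc : ∀ Z ⊆ J, ¬ G.CycleSet Z := fun Z hZJ hZ => (hN.dep hZ).not_indep (hJ.subset hZJ)
  have hsub : insert w (G.restrictEdges J).V ⊆ (G.componentOf w).V := by
    refine insert_subset ⟨hw, .refl⟩ ?_
    rintro y ⟨g, ⟨hgJ, hgE⟩, hy⟩
    exact ⟨G.ends_mem hgE hy, (hIH (hJI hgJ)).2 y hy⟩
  have hle := (G.ncard_add_one_le_ncard_insert hJG hacyc w).trans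
    (ncard_le_ncard hsub (G.componentOf w).finV)
  calc I.encard ≤ J.encard + 1 := hcard
    _ = ((J.ncard + 1 : ℕ) : ℕ∞) := by
      rw [Nat.cast_add_one, (G.finE.subset hJG).cast_ncard_eq]
    _ ≤ _ := by exact_mod_cast hle

lemma IsLiftOf.atMostTwoComponents (h : IsLiftOf M N) (hN : IsCycleMatroidOf G N)
    (hK : M.IsCircuit K) : (G.restrictEdges K).AtMostTwoComponents := by
  set R := G.restrictEdges K
  have hKG : K ⊆ G.E := h.ground_eq_edgeSet hN ▸ hK.subset_ground
  intro u hu v hv w hw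
  by_contra! ⟨huv, huw, hvw⟩
  obtain ⟨Z₁, hZ₁u, hZ₁⟩ := G.exists_cycleSet_subset_componentOf hKG
    (fun _ _ => h.not_isPendantEdge hN hK) hu
  obtain ⟨Z₂, hZ₂v, hZ₂⟩ := G.exists_cycleSet_subset_componentOf hKG
    (fun _ _ => h.not_isPendantEdge hN hK) hv
  obtain ⟨g, hg, hwg⟩ := hw
  have hZK : Z₁ ∪ Z₂ ⊂ K := by
    refine ssubset_of_subset_not_subset (union_subset (fun z hz => (hZ₁u hz).1.1)
      (fun z hz => (hZ₂v hz).1.1)) fun hKZ => ?_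
    rcases hKZ hg.1 with hgZ | hgZ
    exacts [huw ((hZ₁u hgZ).2 w hwg), hvw ((hZ₂v hgZ).2 w hwg)]
  exact (h.dep_union (hN.dep hZ₁) (hN.dep hZ₂)
    ((R.disjoint_componentOf_E huv).mono hZ₁u hZ₂v)).not_indep (hK.ssubset_indep hZK)

end CycleMatroidLift

/-- Let `G` be a graph and let `M` be a lift of the cycle matroid
`M(G)`. Then `G` is a framework for `M`, and moreover for every pair of vertex-disjoint
cycles `C1`, `C2` of `G`, the set `E(C1) ∪ E(C2)` is dependent in `M`. -/
theorem statement19 {α : Type u} {β : Type v} (G : Graph α β) (M N : Matroid β)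
    (hN : IsCycleMatroidOf G N) (hlift : IsLiftOf M N) :
    Framework G M ∧
      ∀ C1 C2 : Set β, G.CycleSet C1 → G.CycleSet C2 →
        (G.restrictEdges C1).V ∩ (G.restrictEdges C2).V = ∅ →
        M.Dep (C1 ∪ C2) := by
  refine ⟨⟨⟨(hlift.ground_eq_edgeSet hN).symm, ?_,
    fun v _ => hlift.closure_deleteVertex_subset hN v⟩,
    fun C hC => hlift.atMostTwoComponents hN (isCircuit_iff_isCircuit.mp hC)⟩, ?_⟩
  · rintro H ⟨w, hw, rfl⟩
    exact hlift.rank_componentOf_le hN hw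
  · intro C1 C2 h1 h2 hV
    refine hlift.dep_union (hN.dep h1) (hN.dep h2) (disjoint_left.mpr fun g hg1 hg2 => ?_)
    obtain ⟨x, hx⟩ := Sym2.exists_mem (G.ends g)
    exact (hV ▸ ⟨⟨g, ⟨hg1, h1.1 hg1⟩, hx⟩, ⟨g, ⟨hg2, h2.1 hg2⟩, hx⟩⟩ :
      x ∈ (∅ : Set α))

end QuasiGraphicPaper
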